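/- Let A, B_1, ..., B_m be self-adjoint d×d matrices and p_1,...,p_m nonnegative weights summing to 1. Then λ(A) ≺ sum_l p_l λ(B_l) (majorization, i.e., weak majorization plus equality of total sums) holds if and only if for every convex function f : R → [0,∞) and every unitarily invariant norm ‖·‖, ‖f(A)‖ ≤ sum_l p_l ‖f(B_l)‖. -/

import Mathlib

open scoped BigOperators ComplexOrder

/-- The eigenvalues of a Hermitian matrix arranged in decreasing order
(counting multiplicities). -/
noncomputable def eigDesc {d : ℕ} {A : Matrix (Fin d) (Fin d) ℂ} (hA : A.IsHermitian) :
    Fin d → ℝ :=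
  fun i => (hA.eigenvalues ∘ Tuple.sort hA.eigenvalues) i.rev

/-- Functional calculus for a Hermitian matrix: apply `f` to the eigenvalues in the
spectral decomposition. -/
noncomputable def herFun {d : ℕ} {A : Matrix (Fin d) (Fin d) ℂ} (hA : A.IsHermitian)
    (f : ℝ → ℝ) : Matrix (Fin d) (Fin d) ℂ :=
  (hA.eigenvectorUnitary : Matrix (Fin d) (Fin d) ℂ) *
    Matrix.diagonal (fun i => (f (hA.eigenvalues i) : ℂ)) *
    star (hA.eigenvectorUnitary : Matrix (Fin d) (Fin d) ℂ)

/-- A unitarily invariant norm on `d × d` complex matrices: a norm `N` with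
`N (U X V) = N X` for all unitaries `U, V`. -/
structure UINorm (d : ℕ) where
  N : Matrix (Fin d) (Fin d) ℂ → ℝ
  add_le : ∀ X Y, N (X + Y) ≤ N X + N Y
  smul_eq : ∀ (c : ℂ) X, N (c • X) = ‖c‖ * N X
  pos_of_ne : ∀ X : Matrix (Fin d) (Fin d) ℂ, X ≠ 0 → (0:ℝ) < N X
  unitary_inv : ∀ U V X, U ∈ Matrix.unitaryGroup (Fin d) ℂ →
    V ∈ Matrix.unitaryGroup (Fin d) ℂ → N (U * X * V) = N X

/-!
Forward direction: for convex `f ≥ 0` the map `v ↦ Φ (diag (f ∘ v))` is convex (`Φ` is monotone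
on nonnegative real diagonals, since flipping the sign of an entry is unitary) and invariant under
permutations. By Rado's theorem `λ(A)` is a convex combination of permutations of
`μ = ∑ p_l λ(B_l)`, so `Φ (f A) ≤ Φ (diag (f ∘ μ)) ≤ ∑ p_l Φ (f (B_l))` by Jensen.

Backward direction: the Ky Fan `k`-norm of a decreasing nonnegative diagonal is the sum of its
first `k` entries. Testing with it and `f = max (· - t) 0`, `t` below all eigenvalues, gives the
prefix inequalities; testing with the trace norm (`k = d`) and `f = max (t - ·) 0`, `t` above all
eigenvalues, gives the reverse inequality of the total sums.
-/

open Finset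

section Majorization

variable {d : ℕ}

/-- `x ≺ y` for vectors listed in decreasing order: prefix sums are compared as the vectors are
listed, without sorting. -/
def IsMajorizedBy (x y : Fin d → ℝ) : Prop :=
  (∀ k, k ≤ d → ∑ i : Fin d with i.val < k, x i ≤ ∑ i : Fin d with i.val < k, y i) ∧
    ∑ i, x i = ∑ i, y i

theorem sum_range_mul_nonneg_of_antitoneOn {b z : ℕ → ℝ} {n : ℕ} (hb : AntitoneOn b (Set.Iio n))
    (hz : ∀ k ≤ n, 0 ≤ ∑ j ∈ range k, z j) (hzn : ∑ j ∈ range n, z j = 0) :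
    0 ≤ ∑ j ∈ range n, b j * z j := by
  have h := Finset.sum_range_by_parts b z n
  simp only [smul_eq_mul] at h
  rw [h, hzn, mul_zero, zero_sub, neg_nonneg]
  refine sum_nonpos fun i hi => mul_nonpos_of_nonpos_of_nonneg ?_ (hz _ ?_)
  · rw [mem_range] at hi
    exact sub_nonpos.2 (hb (by simp; omega) (by simp; omega) (Nat.le_succ i))
  · rw [mem_range] at hi
    omega

theorem sum_filter_val_lt_eq_sum_range (v : Fin d → ℝ) {k : ℕ} (hk : k ≤ d) :
    ∑ i : Fin d with i.val < k, v i =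
      ∑ j ∈ range k, if h : j < d then v ⟨j, h⟩ else 0 := by
  have hrange : (range d).filter (· < k) = range k := by
    ext j; simp only [mem_filter, mem_range]; omega
  rw [sum_filter, ← hrange, sum_filter, ← Fin.sum_univ_eq_sum_range
    (fun j => if j < k then (if h : j < d then v ⟨j, h⟩ else 0) else 0)]
  simp

theorem IsMajorizedBy.sum_mul_le_of_antitone {x y b : Fin d → ℝ} (h : IsMajorizedBy x y)
    (hb : Antitone b) : ∑ i, b i * x i ≤ ∑ i, b i * y i := by
  let extend : (Fin d → ℝ) → ℕ → ℝ := fun v j => if h : j < d then v ⟨j, h⟩ else 0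
  have hsum : ∀ v, ∑ i, v i = ∑ j ∈ range d, extend v j := fun v => by
    simpa using sum_filter_val_lt_eq_sum_range v le_rfl
  have key : 0 ≤ ∑ j ∈ range d, extend b j * extend (y - x) j := by
    refine sum_range_mul_nonneg_of_antitoneOn (fun i hi j hj hij => ?_) (fun k hk => ?_) ?_
    · simp only [extend, dif_pos (show i < d from hi), dif_pos (show j < d from hj)]
      exact hb (Fin.mk_le_mk.2 hij)
    · rw [← sum_filter_val_lt_eq_sum_range _ hk]
      simpa [sum_sub_distrib] using h.1 k hk
    · rw [← hsum]
      simp [sum_sub_distrib, h.2]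
  have : ∑ j ∈ range d, extend b j * extend (y - x) j = ∑ i, b i * (y i - x i) := by
    rw [hsum (fun i => b i * (y i - x i))]
    refine sum_congr rfl fun j hj => ?_
    simp [extend, dif_pos (mem_range.1 hj)]
  rw [this] at key
  simp only [mul_sub, sum_sub_distrib] at key
  linarith

theorem exists_perm_antitone_comp {n : ℕ} {α : Type*} [LinearOrder α] (f : Fin n → α) :
    ∃ σ : Equiv.Perm (Fin n), Antitone (f ∘ σ) :=
  ⟨Fin.revPerm.trans (Tuple.sort f), (Tuple.monotone_sort f).comp_antitone Fin.rev_anti⟩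

/-- Rado's theorem. A functional separating `x` from the hull is, once its coefficients are sorted
decreasingly, no larger on `x` than on a permutation of `y`, by rearrangement and Abel summation. -/
theorem IsMajorizedBy.mem_convexHull_perm {x y : Fin d → ℝ} (h : IsMajorizedBy x y)
    (hx : Antitone x) : x ∈ convexHull ℝ (Set.range fun σ : Equiv.Perm (Fin d) => y ∘ σ) := by
  by_contra hnot
  obtain ⟨φ, u, hφ, hφx⟩ := geometric_hahn_banach_closed_point (convex_convexHull ℝ _)
    ((Set.finite_range _).isClosed_convexHull ℝ) hnot
  set a : Fin d → ℝ := fun i => φ fun j => if i = j then 1 else 0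
  have hφ_apply : ∀ v, φ v = ∑ i, a i * v i := fun v => by
    rw [← ContinuousLinearMap.coe_coe, LinearMap.pi_apply_eq_sum_univ]
    simp [a, mul_comm]
  obtain ⟨τ, hτ⟩ := exists_perm_antitone_comp a
  have hyτ := hφ (y ∘ τ.symm) (subset_convexHull ℝ _ ⟨τ.symm, rfl⟩)
  have key : ∑ i, a i * x i ≤ ∑ i, a i * y (τ.symm i) := calc
    ∑ i, a i * x i = ∑ j, a (τ j) * x (τ j) := (Equiv.sum_comp τ (fun i => a i * x i)).symm
    _ ≤ ∑ j, a (τ j) * x j := (hτ.monovary hx).sum_mul_comp_perm_le_sum_mul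
    _ ≤ ∑ j, a (τ j) * y j := h.sum_mul_le_of_antitone hτ
    _ = ∑ i, a i * y (τ.symm i) := by
      rw [← Equiv.sum_comp τ.symm]; simp
  rw [hφ_apply] at hyτ hφx
  simp only [Function.comp_apply] at hyτ
  linarith

theorem ConvexOn.le_of_isMajorizedBy {g : (Fin d → ℝ) → ℝ} (hg : ConvexOn ℝ Set.univ g)
    (hperm : ∀ (σ : Equiv.Perm (Fin d)) v, g (v ∘ σ) = g v) {x y : Fin d → ℝ}
    (h : IsMajorizedBy x y) (hx : Antitone x) : g x ≤ g y := by
  obtain ⟨_, ⟨σ, rfl⟩, hle⟩ :=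
    hg.exists_ge_of_mem_convexHull (Set.subset_univ _) (h.mem_convexHull_perm hx)
  exact hle.trans (hperm σ y).le

end Majorization

open Matrix

theorem Matrix.permMatrix_mem_unitaryGroup {n R : Type*} [Fintype n] [DecidableEq n] [CommRing R]
    [StarRing R] (σ : Equiv.Perm n) : σ.permMatrix R ∈ unitaryGroup n R := by
  rw [mem_unitaryGroup_iff, star_eq_conjTranspose, conjTranspose_permMatrix, ← permMatrix_mul,
    inv_mul_cancel, permMatrix_one]

theorem Matrix.permMatrix_mul_diagonal_mul_permMatrix_inv {n R : Type*} [Fintype n]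
    [DecidableEq n] [CommRing R] (σ : Equiv.Perm n) (v : n → R) :
    σ.permMatrix R * diagonal v * σ⁻¹.permMatrix R = diagonal (v ∘ σ) := by
  rw [PEquiv.toMatrix_toPEquiv_mul, PEquiv.mul_toMatrix_toPEquiv]
  exact submatrix_diagonal_equiv v σ

theorem antitone_eigDesc {d : ℕ} {A : Matrix (Fin d) (Fin d) ℂ} (hA : A.IsHermitian) :
    Antitone (eigDesc hA) :=
  (Tuple.monotone_sort _).comp_antitone Fin.rev_anti

namespace UINorm

variable {d : ℕ} (Φ : UINorm d)

theorem smul_of_nonneg {r : ℝ} (hr : 0 ≤ r) (X : Matrix (Fin d) (Fin d) ℂ) :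
    Φ.N ((r : ℂ) • X) = r * Φ.N X := by
  rw [Φ.smul_eq, Complex.norm_real, Real.norm_of_nonneg hr]

theorem smul_add_smul_le {s t : ℝ} (hs : 0 ≤ s) (ht : 0 ≤ t) (X Y : Matrix (Fin d) (Fin d) ℂ) :
    Φ.N ((s : ℂ) • X + (t : ℂ) • Y) ≤ s * Φ.N X + t * Φ.N Y := by
  rw [← Φ.smul_of_nonneg hs, ← Φ.smul_of_nonneg ht]
  exact Φ.add_le _ _

theorem diagonal_comp_perm (σ : Equiv.Perm (Fin d)) (v : Fin d → ℂ) :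
    Φ.N (diagonal (v ∘ σ)) = Φ.N (diagonal v) := by
  rw [← permMatrix_mul_diagonal_mul_permMatrix_inv]
  exact Φ.unitary_inv _ _ _ (permMatrix_mem_unitaryGroup σ) (permMatrix_mem_unitaryGroup σ⁻¹)

theorem herFun_eq_diagonal_eigDesc {A : Matrix (Fin d) (Fin d) ℂ} (hA : A.IsHermitian)
    (f : ℝ → ℝ) (σ : Equiv.Perm (Fin d)) :
    Φ.N (herFun hA f) = Φ.N (diagonal fun i => (f (eigDesc hA (σ i)) : ℂ)) := by
  rw [herFun, Φ.unitary_inv _ _ _ (SetLike.coe_mem _) (Unitary.star_mem (SetLike.coe_mem _)),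
    ← Φ.diagonal_comp_perm (σ.trans (Fin.revPerm.trans (Tuple.sort hA.eigenvalues)))]
  rfl

theorem diagonal_update_le (b : Fin d → ℝ) (j : Fin d) {r : ℝ} (hr : |r| ≤ |b j|) :
    Φ.N (diagonal fun i => (Function.update b j r i : ℂ)) ≤
      Φ.N (diagonal fun i => (b i : ℂ)) := by
  rcases eq_or_ne (b j) 0 with hb | hb
  · rw [hb, abs_zero, abs_nonpos_iff] at hr
    rw [hr, ← hb, Function.update_eq_self]
  set s : ℝ := (1 + r / b j) / 2
  obtain ⟨hrb₁, hrb₂⟩ : -1 ≤ r / b j ∧ r / b j ≤ 1 :=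
    abs_le.1 (by rw [abs_div]; exact div_le_one_of_le₀ hr (abs_nonneg _))
  have hs0 : 0 ≤ s := by simp only [s]; linarith
  have hs1 : 0 ≤ 1 - s := by simp only [s]; linarith
  set D : Matrix (Fin d) (Fin d) ℂ := diagonal fun i => (b i : ℂ) with hD
  set E : Matrix (Fin d) (Fin d) ℂ := diagonal (Function.update 1 j (-1))
  have hE : E ∈ unitaryGroup (Fin d) ℂ := by
    rw [mem_unitaryGroup_iff, star_eq_conjTranspose, diagonal_conjTranspose,
      diagonal_mul_diagonal, ← diagonal_one]
    congr 1; ext i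
    rcases eq_or_ne i j with rfl | h <;> simp [*]
  have hsplit : (diagonal fun i => (Function.update b j r i : ℂ)) =
      (s : ℂ) • D + ((1 - s : ℝ) : ℂ) • (E * D * 1) := by
    rw [mul_one, hD, diagonal_mul_diagonal, ← diagonal_smul, ← diagonal_smul, diagonal_add]
    congr 1; ext i
    rcases eq_or_ne i j with rfl | h
    · simp only [Function.update_self, Pi.smul_apply, smul_eq_mul, s]
      push_cast; field_simp; ring
    · simp [Function.update_of_ne h, s]; ring
  calc _ = _ := by rw [hsplit]
    _ ≤ s * Φ.N D + (1 - s) * Φ.N (E * D * 1) := Φ.smul_add_smul_le hs0 hs1 _ _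
    _ = Φ.N D := by rw [Φ.unitary_inv _ _ _ hE (one_mem _)]; ring

theorem diagonal_mono {a b : Fin d → ℝ} (hab : ∀ i, |a i| ≤ |b i|) :
    Φ.N (diagonal fun i => (a i : ℂ)) ≤ Φ.N (diagonal fun i => (b i : ℂ)) := by
  classical
  suffices ∀ s : Finset (Fin d),
      Φ.N (diagonal fun i => ((if i ∈ s then a i else b i : ℝ) : ℂ)) ≤
        Φ.N (diagonal fun i => (b i : ℂ)) by
    simpa using this univ
  intro s
  induction s using Finset.induction_on with
  | empty => simp
  | insert j s hj ih =>
    refine le_trans (le_of_eq ?_)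
      ((Φ.diagonal_update_le _ j (r := a j) (by simpa [hj] using hab j)).trans ih)
    congr 2; ext i
    rcases eq_or_ne i j with rfl | h <;> simp [*]

theorem convexOn_diagonal_comp {f : ℝ → ℝ} (hf : ConvexOn ℝ Set.univ f) (hf0 : ∀ x, 0 ≤ f x) :
    ConvexOn ℝ Set.univ fun v : Fin d → ℝ => Φ.N (diagonal fun i => (f (v i) : ℂ)) := by
  refine ⟨convex_univ, fun u _ v _ s t hs ht hst => ?_⟩
  calc Φ.N (diagonal fun i => (f ((s • u + t • v) i) : ℂ))
      ≤ Φ.N (diagonal fun i => ((s * f (u i) + t * f (v i) : ℝ) : ℂ)) := by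
        refine Φ.diagonal_mono fun i => ?_
        have := hf0 (u i)
        have := hf0 (v i)
        rw [abs_of_nonneg (hf0 _), abs_of_nonneg (by positivity)]
        simpa using hf.2 (Set.mem_univ (u i)) (Set.mem_univ (v i)) hs ht hst
    _ = Φ.N ((s : ℂ) • diagonal (fun i => (f (u i) : ℂ)) +
          (t : ℂ) • diagonal fun i => (f (v i) : ℂ)) := by
        rw [← diagonal_smul, ← diagonal_smul, diagonal_add]
        congr 2; ext i; simp
    _ ≤ _ := Φ.smul_add_smul_le hs ht _ _

end UINorm

theorem UINorm.herFun_le_of_isMajorizedBy {d m : ℕ} (Φ : UINorm d)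
    {A : Matrix (Fin d) (Fin d) ℂ} (hA : A.IsHermitian)
    {B : Fin m → Matrix (Fin d) (Fin d) ℂ} (hB : ∀ l, (B l).IsHermitian)
    {p : Fin m → ℝ} (hp : ∀ l, 0 ≤ p l) (hp_sum : ∑ l, p l = 1)
    (h : IsMajorizedBy (eigDesc hA) fun i => ∑ l, p l * eigDesc (hB l) i)
    {f : ℝ → ℝ} (hf : ConvexOn ℝ Set.univ f) (hf0 : ∀ x, 0 ≤ f x) :
    Φ.N (herFun hA f) ≤ ∑ l, p l * Φ.N (herFun (hB l) f) := by
  set g := fun v : Fin d → ℝ => Φ.N (diagonal fun i => (f (v i) : ℂ))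
  have hg : ConvexOn ℝ Set.univ g := Φ.convexOn_diagonal_comp hf hf0
  have hherFun : ∀ {C : Matrix (Fin d) (Fin d) ℂ} (hC : C.IsHermitian),
      Φ.N (herFun hC f) = g (eigDesc hC) :=
    fun hC => Φ.herFun_eq_diagonal_eigDesc hC f (Equiv.refl _)
  calc Φ.N (herFun hA f) = g (eigDesc hA) := hherFun hA
    _ ≤ g (∑ l, p l • eigDesc (hB l)) :=
      hg.le_of_isMajorizedBy (fun σ v => Φ.diagonal_comp_perm σ fun i => (f (v i) : ℂ))
        (by convert h using 2; simp [Finset.sum_apply]) (antitone_eigDesc hA)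
    _ ≤ ∑ l, p l • g (eigDesc (hB l)) :=
      hg.map_sum_le (fun l _ => hp l) hp_sum fun _ _ => Set.mem_univ _
    _ = ∑ l, p l * Φ.N (herFun (hB l) f) := by simp only [hherFun, smul_eq_mul]

theorem Matrix.sum_norm_sq_row_of_mem_unitaryGroup {n 𝕜 : Type*} [Fintype n] [DecidableEq n]
    [RCLike 𝕜] {U : Matrix n n 𝕜} (hU : U ∈ unitaryGroup n 𝕜) (i : n) :
    ∑ j, ‖U i j‖ ^ 2 = 1 := by
  have h := congr_fun₂ (mem_unitaryGroup_iff.1 hU) i i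
  simp only [mul_apply, star_apply, RCLike.star_def, RCLike.mul_conj, one_apply_eq] at h
  exact_mod_cast h

theorem Matrix.sum_norm_sq_col_of_mem_unitaryGroup {n 𝕜 : Type*} [Fintype n] [DecidableEq n]
    [RCLike 𝕜] {U : Matrix n n 𝕜} (hU : U ∈ unitaryGroup n 𝕜) (j : n) :
    ∑ i, ‖U i j‖ ^ 2 = 1 := by
  have h := congr_fun₂ (mem_unitaryGroup_iff'.1 hU) j j
  simp only [mul_apply, star_apply, RCLike.star_def, RCLike.conj_mul, one_apply_eq] at h
  exact_mod_cast h

theorem Matrix.norm_unitary_mul_mul_apply_le {n 𝕜 : Type*} [Fintype n] [DecidableEq n]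
    [RCLike 𝕜] {U V : Matrix n n 𝕜} (hU : U ∈ unitaryGroup n 𝕜) (hV : V ∈ unitaryGroup n 𝕜)
    (X : Matrix n n 𝕜) (i j : n) : ‖(U * X * V) i j‖ ≤ ∑ a, ∑ b, ‖X a b‖ := by
  calc ‖(U * X * V) i j‖ = ‖∑ b, ∑ a, U i a * X a b * V b j‖ := by simp [mul_apply, sum_mul]
    _ ≤ ∑ b, ∑ a, ‖U i a * X a b * V b j‖ :=
      (norm_sum_le _ _).trans (sum_le_sum fun b _ => norm_sum_le _ _)
    _ ≤ ∑ b, ∑ a, ‖X a b‖ := sum_le_sum fun b _ => sum_le_sum fun a _ => by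
      rw [norm_mul, norm_mul]
      calc ‖U i a‖ * ‖X a b‖ * ‖V b j‖ ≤ 1 * ‖X a b‖ * 1 := by
            gcongr
            exacts [entry_norm_bound_of_unitary hU i a, entry_norm_bound_of_unitary hV b j]
        _ = ‖X a b‖ := by ring
    _ = ∑ a, ∑ b, ‖X a b‖ := sum_comm

theorem sum_mul_le_one_of_sum_sq_eq_one {ι : Type*} {s : Finset ι} {f g : ι → ℝ}
    (hf : ∑ i ∈ s, f i ^ 2 = 1) (hg : ∑ i ∈ s, g i ^ 2 = 1) : ∑ i ∈ s, f i * g i ≤ 1 := by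
  simpa [hf, hg] using Real.sum_mul_le_sqrt_mul_sqrt s f g

theorem sum_mul_le_sum_filter_val_lt {d k : ℕ} (hk : k ≤ d) {c w : Fin d → ℝ}
    (hc0 : ∀ i, 0 ≤ c i) (hc : Antitone c) (hw0 : ∀ i, 0 ≤ w i) (hw1 : ∀ i, w i ≤ 1)
    (hwk : ∑ i, w i ≤ k) :
    ∑ i, c i * w i ≤ ∑ i : Fin d with i.val < k, c i := by
  -- `t` separates the first `k` entries of `c` from the others
  set t : ℝ := if h : k < d then c ⟨k, h⟩ else 0
  have ht0 : 0 ≤ t := by unfold t; split_ifs <;> simp [hc0]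
  have hterm : ∀ i, (c i - t) * w i ≤ if (i : ℕ) < k then c i - t else 0 := by
    intro i
    split_ifs with hi
    · have : t ≤ c i := by
        unfold t; split_ifs with h
        · exact hc (Fin.le_def.2 hi.le)
        · exact hc0 i
      nlinarith [hw1 i]
    · have hkd : k < d := by omega
      have : c i ≤ t := by
        simp only [t, dif_pos hkd]; exact hc (Fin.le_def.2 (by simpa using hi))
      nlinarith [hw0 i]
  have hcard : (#{i : Fin d | i.val < k} : ℝ) = k := by
    rw [Fin.card_filter_val_lt, min_eq_right hk]
  calc ∑ i, c i * w i = ∑ i, (c i - t) * w i + t * ∑ i, w i := by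
        rw [mul_sum, ← sum_add_distrib]; congr 1; ext; ring
    _ ≤ ∑ i : Fin d, (if (i : ℕ) < k then c i - t else 0) + t * k :=
      add_le_add (sum_le_sum fun i _ => hterm i) (mul_le_mul_of_nonneg_left hwk ht0)
    _ = ∑ i : Fin d with i.val < k, c i := by
      rw [← sum_filter, sum_sub_distrib, sum_const, nsmul_eq_mul, hcard]; ring

section KyFan

variable {d : ℕ} {k : ℕ}

noncomputable def diagHeadNorm (k : ℕ) (M : Matrix (Fin d) (Fin d) ℂ) : ℝ :=
  ∑ i : Fin d with i.val < k, ‖M i i‖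

/-- The Ky Fan `k`-norm (the sum of the `k` largest singular values), in variational form. -/
noncomputable def kyFanNorm (k : ℕ) (X : Matrix (Fin d) (Fin d) ℂ) : ℝ :=
  ⨆ UV : unitaryGroup (Fin d) ℂ × unitaryGroup (Fin d) ℂ, diagHeadNorm k (UV.1.1 * X * UV.2.1)

theorem bddAbove_range_diagHeadNorm (k : ℕ) (X : Matrix (Fin d) (Fin d) ℂ) :
    BddAbove (Set.range fun UV : unitaryGroup (Fin d) ℂ × unitaryGroup (Fin d) ℂ =>
      diagHeadNorm k (UV.1.1 * X * UV.2.1)) := by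
  refine ⟨∑ _i : Fin d, ∑ a, ∑ b, ‖X a b‖, ?_⟩
  rintro _ ⟨UV, rfl⟩
  exact (sum_le_sum_of_subset_of_nonneg (filter_subset _ _) fun _ _ _ => norm_nonneg _).trans
    (sum_le_sum fun i _ => norm_unitary_mul_mul_apply_le UV.1.2 UV.2.2 X i i)

theorem diagHeadNorm_le_kyFanNorm {U V : Matrix (Fin d) (Fin d) ℂ}
    (hU : U ∈ unitaryGroup (Fin d) ℂ) (hV : V ∈ unitaryGroup (Fin d) ℂ)
    (X : Matrix (Fin d) (Fin d) ℂ) : diagHeadNorm k (U * X * V) ≤ kyFanNorm k X :=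
  le_ciSup (f := fun UV : unitaryGroup (Fin d) ℂ × unitaryGroup (Fin d) ℂ =>
    diagHeadNorm k (UV.1.1 * X * UV.2.1))
    (bddAbove_range_diagHeadNorm k X) (⟨U, hU⟩, ⟨V, hV⟩)

theorem kyFanNorm_add_le (X Y : Matrix (Fin d) (Fin d) ℂ) :
    kyFanNorm k (X + Y) ≤ kyFanNorm k X + kyFanNorm k Y := by
  refine ciSup_le fun ⟨⟨U, hU⟩, ⟨V, hV⟩⟩ => ?_
  calc diagHeadNorm k (U * (X + Y) * V)
      ≤ diagHeadNorm k (U * X * V) + diagHeadNorm k (U * Y * V) := by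
        rw [mul_add, add_mul, diagHeadNorm, diagHeadNorm, diagHeadNorm, ← sum_add_distrib]
        exact sum_le_sum fun i _ => norm_add_le _ _
    _ ≤ kyFanNorm k X + kyFanNorm k Y :=
      add_le_add (diagHeadNorm_le_kyFanNorm hU hV X) (diagHeadNorm_le_kyFanNorm hU hV Y)

theorem kyFanNorm_smul (c : ℂ) (X : Matrix (Fin d) (Fin d) ℂ) :
    kyFanNorm k (c • X) = ‖c‖ * kyFanNorm k X := by
  simp only [kyFanNorm, Real.mul_iSup_of_nonneg (norm_nonneg c), diagHeadNorm, mul_sum,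
    Matrix.mul_smul, Matrix.smul_mul, Matrix.smul_apply, smul_eq_mul, norm_mul]

theorem kyFanNorm_unitary_mul_mul {U V : Matrix (Fin d) (Fin d) ℂ}
    (hU : U ∈ unitaryGroup (Fin d) ℂ) (hV : V ∈ unitaryGroup (Fin d) ℂ)
    (X : Matrix (Fin d) (Fin d) ℂ) : kyFanNorm k (U * X * V) = kyFanNorm k X := by
  unfold kyFanNorm
  rw [← (Equiv.prodCongr (Equiv.mulRight ⟨U, hU⟩) (Equiv.mulLeft ⟨V, hV⟩)).iSup_comp
    (g := fun UV : unitaryGroup (Fin d) ℂ × unitaryGroup (Fin d) ℂ =>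
      diagHeadNorm k (UV.1.1 * X * UV.2.1))]
  simp [Matrix.mul_assoc]

theorem kyFanNorm_pos (hk : 0 < k) {X : Matrix (Fin d) (Fin d) ℂ} (hX : X ≠ 0) :
    0 < kyFanNorm k X := by
  obtain ⟨a, b, hab⟩ : ∃ a b, X a b ≠ 0 := by
    by_contra! h
    exact hX (Matrix.ext h)
  set z : Fin d := ⟨0, a.pos⟩
  set U := (Equiv.swap z a).permMatrix ℂ
  set V := (Equiv.swap z b).permMatrix ℂ
  calc 0 < ‖X a b‖ := norm_pos_iff.2 hab
    _ = ‖(U * X * V) z z‖ := by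
      simp [U, V, PEquiv.toMatrix_toPEquiv_mul, PEquiv.mul_toMatrix_toPEquiv]
    _ ≤ diagHeadNorm k (U * X * V) :=
      single_le_sum (f := fun i => ‖(U * X * V) i i‖) (fun _ _ => norm_nonneg _)
        (by simp [z, hk])
    _ ≤ kyFanNorm k X :=
      diagHeadNorm_le_kyFanNorm (permMatrix_mem_unitaryGroup _) (permMatrix_mem_unitaryGroup _) X

noncomputable def kyFan (k : ℕ) (hk : 0 < k) : UINorm d where
  N := kyFanNorm k
  add_le := kyFanNorm_add_le
  smul_eq := kyFanNorm_smul
  pos_of_ne _ := kyFanNorm_pos hk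
  unitary_inv _ _ X hU hV := kyFanNorm_unitary_mul_mul hU hV X

theorem diagHeadNorm_unitary_mul_diagonal_mul_le (hk : k ≤ d) {U V : Matrix (Fin d) (Fin d) ℂ}
    (hU : U ∈ unitaryGroup (Fin d) ℂ) (hV : V ∈ unitaryGroup (Fin d) ℂ) {c : Fin d → ℝ}
    (hc0 : ∀ i, 0 ≤ c i) (hc : Antitone c) :
    diagHeadNorm k (U * diagonal (fun i => (c i : ℂ)) * V) ≤
      ∑ i : Fin d with i.val < k, c i := by
  set F : Finset (Fin d) := {i | i.val < k}
  set w : Fin d → ℝ := fun j => ∑ i ∈ F, ‖U i j‖ * ‖V j i‖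
  have hw0 : ∀ j, 0 ≤ w j := fun j => sum_nonneg fun i _ => by positivity
  have hw1 : ∀ j, w j ≤ 1 := fun j =>
    (sum_le_sum_of_subset_of_nonneg (filter_subset _ _) fun i _ _ => by positivity).trans
      (sum_mul_le_one_of_sum_sq_eq_one (sum_norm_sq_col_of_mem_unitaryGroup hU j)
        (sum_norm_sq_row_of_mem_unitaryGroup hV j))
  have hwk : ∑ j, w j ≤ k :=
    calc ∑ j, w j = ∑ i ∈ F, ∑ j, ‖U i j‖ * ‖V j i‖ := sum_comm
      _ ≤ ∑ _i ∈ F, (1 : ℝ) := sum_le_sum fun i _ =>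
        sum_mul_le_one_of_sum_sq_eq_one (sum_norm_sq_row_of_mem_unitaryGroup hU i)
          (sum_norm_sq_col_of_mem_unitaryGroup hV i)
      _ = k := by simp [F, Fin.card_filter_val_lt, hk]
  refine le_trans ?_ (sum_mul_le_sum_filter_val_lt hk hc0 hc hw0 hw1 hwk)
  calc diagHeadNorm k (U * diagonal (fun i => (c i : ℂ)) * V)
      = ∑ i ∈ F, ‖∑ j, U i j * c j * V j i‖ := by
        simp only [diagHeadNorm, F, mul_apply (M := U), diagonal_mul, mul_assoc]
    _ ≤ ∑ i ∈ F, ∑ j, c j * (‖U i j‖ * ‖V j i‖) := sum_le_sum fun i _ =>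
      (norm_sum_le _ _).trans_eq (sum_congr rfl fun j _ => by
        rw [norm_mul, norm_mul, Complex.norm_real, Real.norm_of_nonneg (hc0 j)]; ring)
    _ = ∑ j, c j * w j := by rw [sum_comm]; simp [w, mul_sum]

theorem kyFanNorm_diagonal (hk : k ≤ d) {c : Fin d → ℝ} (hc0 : ∀ i, 0 ≤ c i) (hc : Antitone c) :
    kyFanNorm k (diagonal fun i => (c i : ℂ)) =
      ∑ i : Fin d with i.val < k, c i := by
  refine le_antisymm (ciSup_le fun ⟨⟨U, hU⟩, ⟨V, hV⟩⟩ =>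
    diagHeadNorm_unitary_mul_diagonal_mul_le hk hU hV hc0 hc) ?_
  have := diagHeadNorm_le_kyFanNorm (k := k) (one_mem _) (one_mem _)
    (diagonal fun i => (c i : ℂ))
  simpa [diagHeadNorm, abs_of_nonneg (hc0 _)] using this

theorem kyFan_N_herFun (hk0 : 0 < k) (hk : k ≤ d) {A : Matrix (Fin d) (Fin d) ℂ}
    (hA : A.IsHermitian) {f : ℝ → ℝ} (hf0 : ∀ x, 0 ≤ f x) (σ : Equiv.Perm (Fin d))
    (hσ : Antitone fun i => f (eigDesc hA (σ i))) :
    (kyFan k hk0).N (herFun hA f) =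
      ∑ i : Fin d with i.val < k, f (eigDesc hA (σ i)) := by
  rw [UINorm.herFun_eq_diagonal_eigDesc _ hA f σ]
  exact kyFanNorm_diagonal hk (fun i => hf0 _) hσ

theorem kyFan_N_herFun_of_monotone (hk0 : 0 < k) (hk : k ≤ d) {A : Matrix (Fin d) (Fin d) ℂ}
    (hA : A.IsHermitian) {f : ℝ → ℝ} (hf0 : ∀ x, 0 ≤ f x) (hf : Monotone f) :
    (kyFan k hk0).N (herFun hA f) =
      ∑ i : Fin d with i.val < k, f (eigDesc hA i) :=
  kyFan_N_herFun hk0 hk hA hf0 (Equiv.refl _) (hf.comp_antitone (antitone_eigDesc hA))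

theorem kyFan_N_herFun_eq_sum (hd : 0 < d) {A : Matrix (Fin d) (Fin d) ℂ} (hA : A.IsHermitian)
    {f : ℝ → ℝ} (hf0 : ∀ x, 0 ≤ f x) :
    (kyFan d hd).N (herFun hA f) = ∑ i, f (eigDesc hA i) := by
  obtain ⟨σ, hσ⟩ := exists_perm_antitone_comp fun i => f (eigDesc hA i)
  rw [kyFan_N_herFun hd le_rfl hA hf0 σ hσ, filter_true_of_mem fun i _ => i.isLt]
  exact Equiv.sum_comp σ fun i => f (eigDesc hA i)

end KyFan

theorem sum_le_sum_of_forall_sum_max_sub_le {ι κ : Type*} [Fintype κ] (s : Finset ι)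
    (x : ι → ℝ) (y : κ → ι → ℝ) {p : κ → ℝ} (hp_sum : ∑ l, p l = 1)
    (h : ∀ t, ∑ i ∈ s, max (x i - t) 0 ≤ ∑ l, p l * ∑ i ∈ s, max (y l i - t) 0) :
    ∑ i ∈ s, x i ≤ ∑ i ∈ s, ∑ l, p l * y l i := by
  classical
  obtain ⟨t, ht⟩ := (s.image x ∪ univ.biUnion fun l => s.image (y l)).bddBelow
  have hx : ∀ i ∈ s, max (x i - t) 0 = x i - t := fun i hi =>
    max_eq_left (sub_nonneg.2 (ht (mem_coe.2 (mem_union_left _ (mem_image_of_mem x hi)))))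
  have hy : ∀ l, ∀ i ∈ s, max (y l i - t) 0 = y l i - t := fun l i hi =>
    max_eq_left (sub_nonneg.2 (ht (mem_coe.2 (mem_union_right _
      (mem_biUnion.2 ⟨l, mem_univ _, mem_image_of_mem (y l) hi⟩)))))
  have key : ∑ i ∈ s, (x i - t) ≤ ∑ l, p l * ∑ i ∈ s, (y l i - t) :=
    calc ∑ i ∈ s, (x i - t) = ∑ i ∈ s, max (x i - t) 0 := (sum_congr rfl hx).symm
      _ ≤ ∑ l, p l * ∑ i ∈ s, max (y l i - t) 0 := h t
      _ = ∑ l, p l * ∑ i ∈ s, (y l i - t) :=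
        sum_congr rfl fun l _ => by rw [sum_congr rfl (hy l)]
  have hrhs : ∑ l, p l * ∑ i ∈ s, (y l i - t) = ∑ i ∈ s, ∑ l, p l * y l i - s.card * t := by
    simp only [sum_sub_distrib, mul_sub, sum_const, nsmul_eq_mul, ← sum_mul, hp_sum, mul_sum]
    rw [sum_comm]; ring
  rw [hrhs, sum_sub_distrib, sum_const, nsmul_eq_mul] at key
  linarith

theorem isMajorizedBy_of_forall_norm_herFun_le {d m : ℕ} {A : Matrix (Fin d) (Fin d) ℂ}
    (hA : A.IsHermitian) {B : Fin m → Matrix (Fin d) (Fin d) ℂ} (hB : ∀ l, (B l).IsHermitian)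
    {p : Fin m → ℝ} (hp_sum : ∑ l, p l = 1)
    (H : ∀ f : ℝ → ℝ, ConvexOn ℝ Set.univ f → (∀ x, 0 ≤ f x) →
      ∀ Φ : UINorm d, Φ.N (herFun hA f) ≤ ∑ l, p l * Φ.N (herFun (hB l) f)) :
    IsMajorizedBy (eigDesc hA) fun i => ∑ l, p l * eigDesc (hB l) i := by
  have hprefix : ∀ k, k ≤ d → ∑ i : Fin d with i.val < k, eigDesc hA i ≤
      ∑ i : Fin d with i.val < k, ∑ l, p l * eigDesc (hB l) i := by
    intro k hk
    rcases Nat.eq_zero_or_pos k with rfl | hk0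
    · simp
    refine sum_le_sum_of_forall_sum_max_sub_le _ _ _ hp_sum fun t => ?_
    have hf : ConvexOn ℝ Set.univ fun z => max (z - t) 0 :=
      ((convexOn_id convex_univ).sub (concaveOn_const t convex_univ)).sup
        (convexOn_const 0 convex_univ)
    have hmono : Monotone fun z : ℝ => max (z - t) 0 := fun a b hab =>
      max_le_max (by linarith) le_rfl
    simpa only [kyFan_N_herFun_of_monotone hk0 hk _ (fun _ => le_max_right _ _) hmono] using
      H _ hf (fun _ => le_max_right _ _) (kyFan k hk0)
  refine ⟨hprefix, le_antisymm (by simpa using hprefix d le_rfl) ?_⟩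
  rcases Nat.eq_zero_or_pos d with rfl | hd
  · simp
  have := sum_le_sum_of_forall_sum_max_sub_le univ (fun i => -eigDesc hA i)
    (fun l i => -eigDesc (hB l) i) hp_sum fun t => by
      have hf : ConvexOn ℝ Set.univ fun z => max (-z - t) 0 :=
        ((concaveOn_id convex_univ).neg.sub (concaveOn_const t convex_univ)).sup
          (convexOn_const 0 convex_univ)
      simpa only [kyFan_N_herFun_eq_sum hd _ (fun _ => le_max_right _ _)] using
        H _ hf (fun _ => le_max_right _ _) (kyFan d hd)
  simpa [sum_neg_distrib, mul_neg] using this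

/-- **Theorem 3.3, discrete case.** For self-adjoint `A, B l` and weights `p l ≥ 0`
summing to `1`: `λ(A) ≺ ∑ l, p l • λ(B l)` (majorization) holds if and only if for
every convex `f : ℝ → [0,∞)` and every unitarily invariant norm `N`,
`N (f(A)) ≤ ∑ l, p l * N (f(B l))`. -/
theorem majorization_average_iff_norm_ineq_convex
    {d m : ℕ} {A : Matrix (Fin d) (Fin d) ℂ} (hA : A.IsHermitian)
    {B : Fin m → Matrix (Fin d) (Fin d) ℂ} (hB : ∀ l, (B l).IsHermitian)
    (p : Fin m → ℝ) (hp : ∀ l, 0 ≤ p l) (hp_sum : ∑ l, p l = 1) :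
    ((∀ k, k ≤ d →
        ∑ i ∈ Finset.univ.filter (fun i : Fin d => (i : ℕ) < k), eigDesc hA i ≤
        ∑ i ∈ Finset.univ.filter (fun i : Fin d => (i : ℕ) < k), ∑ l, p l * eigDesc (hB l) i) ∧
      ∑ i, eigDesc hA i = ∑ i, ∑ l, p l * eigDesc (hB l) i)
    ↔ (∀ f : ℝ → ℝ, ConvexOn ℝ Set.univ f → (∀ x, 0 ≤ f x) →
        ∀ Φ : UINorm d, Φ.N (herFun hA f) ≤ ∑ l, p l * Φ.N (herFun (hB l) f)) :=
  ⟨fun h _ hf hf0 Φ => Φ.herFun_le_of_isMajorizedBy hA hB hp hp_sum h hf hf0,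
    isMajorizedBy_of_forall_norm_herFun_le hA hB hp_sum⟩
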